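/- arXiv:2511.14382 — 6 statements merged into one kernel-verified Lean document; each statement's English description precedes it below -/
import Mathlib

section
/- Let g : ℤ_p → E be a continuous function into a finite extension E of ℚ_p, and define g^{[1]}(x) = g(x+1) - g(x). Then there exists k ∈ ℕ such that inf_{x∈ℤ_p} v_p(g^{[p^k]}(x)) ≥ inf_{x∈ℤ_p} v_p(g(x)) + 1, where g^{[n+1]} = (g^{[n]})^{[1]}. -/
open Function

/-- For a continuous function `g : ℤ_p → E` into a finite extension `E` of `ℚ_p`
(with absolute value extending the one of `ℚ_p`, normalized by `v_p(p) = 1`),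
there exists `k` such that the `p^k`-th iterated forward difference
`g^{[p^k]}` satisfies `inf v_p(g^{[p^k]}) ≥ inf v_p(g) + 1`, i.e.
`sup ‖g^{[p^k]}‖ ≤ (sup ‖g‖) / p`. -/
theorem exists_iteratedFwdDiff_sup_norm_le (p : ℕ) [Fact p.Prime]
    (E : Type*) [NormedField E] [Algebra ℚ_[p] E] [FiniteDimensional ℚ_[p] E]
    [IsUltrametricDist E]
    (hE : ∀ q : ℚ_[p], ‖algebraMap ℚ_[p] E q‖ = ‖q‖)
    (g : ℤ_[p] → E) (hg : Continuous g) :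
    ∃ k : ℕ, ∀ x : ℤ_[p],
      ‖((fwdDiff (1 : ℤ_[p]))^[p ^ k] g) x‖ ≤ (⨆ y : ℤ_[p], ‖g y‖) / p := by
  have hp : Fact p.Prime := inferInstance
  haveI : NormedSpace ℚ_[p] E :=
    ⟨fun q x => by rw [Algebra.smul_def, norm_mul, hE]⟩
  set F : C(ℤ_[p], E) := ⟨g, hg⟩ with hF
  have hFnorm : ‖F‖ = ⨆ y : ℤ_[p], ‖g y‖ := F.norm_eq_iSup_norm
  -- find modulus of uniform continuity
  obtain ⟨t, ht⟩ : ∃ t : ℕ, ∀ x y : ℤ_[p], ‖x - y‖ ≤ (p : ℝ) ^ (-t : ℤ) →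
      ‖g x - g y‖ ≤ ‖F‖ / p ^ 1 := by
    rcases eq_or_ne F 0 with h0 | hf
    · refine ⟨0, fun x y _ => ?_⟩
      have hx : g x = 0 := congrFun (congrArg (fun f : C(ℤ_[p], E) => ⇑f) h0) x
      have hy : g y = 0 := congrFun (congrArg (fun f : C(ℤ_[p], E) => ⇑f) h0) y
      simp [hx, hy]
      positivity
    · have hpos : 0 < ‖F‖ / p ^ 1 :=
        div_pos (norm_pos_iff.mpr hf) (mod_cast pow_pos hp.out.pos _)
      obtain ⟨δ, hδpos, hδf⟩ := F.uniform_continuity _ hpos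
      obtain ⟨t, htlt⟩ := PadicInt.exists_pow_neg_lt p hδpos
      exact ⟨t, fun x y hxy => by
        show ‖F x - F y‖ ≤ _
        simpa only [dist_eq_norm_sub] using (hδf (hxy.trans_lt htlt)).le⟩
  refine ⟨t, fun x => ?_⟩
  -- shifted function
  set Fx : C(ℤ_[p], E) := ⟨fun y => g (x + y), hg.comp (continuous_add_left x)⟩ with hFx
  have hnorm : ‖Fx‖ = ‖F‖ := by
    apply le_antisymm
    · refine Fx.norm_le_of_nonempty.mpr fun y => ?_
      exact (F.norm_coe_le_norm (x + y))
    · refine F.norm_le_of_nonempty.mpr fun y => ?_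
      have : F y = Fx (y - x) := by simp [hF, hFx]
      rw [this]
      exact Fx.norm_coe_le_norm _
  have hst : ∀ a b : ℤ_[p], ‖a - b‖ ≤ (p : ℝ) ^ (-t : ℤ) → ‖Fx a - Fx b‖ ≤ ‖Fx‖ / p ^ 1 := by
    intro a b hab
    rw [hnorm]
    refine ht (x + a) (x + b) ?_
    simpa [add_sub_add_left_eq_sub] using hab
  letI : Module ℤ_[p] E := Module.compHom E ((algebraMap ℚ_[p] E).comp PadicInt.Coe.ringHom)
  haveI : IsBoundedSMul ℤ_[p] E := IsBoundedSMul.of_norm_smul_le (fun r x =>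
    le_of_eq (by
      show ‖algebraMap ℚ_[p] E (PadicInt.Coe.ringHom r) * x‖ = _
      rw [norm_mul, hE]; rfl))
  have key := PadicInt.fwdDiff_iter_le_of_forall_le hst 0
  rw [zero_add, one_mul] at key
  -- identify the two iterated differences
  have hiter : (fwdDiff (1 : ℤ_[p]))^[p ^ t] g x = (fwdDiff (1 : ℤ_[p]))^[p ^ t] Fx 0 := by
    rw [fwdDiff_iter_eq_sum_shift, fwdDiff_iter_eq_sum_shift]
    refine Finset.sum_congr rfl fun k _ => ?_
    simp [hFx]
  rw [hiter, ← hFnorm, ← hnorm]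
  simpa using key
end

section
/- (Mahler's theorem) For any continuous function g : ℤ_p → ℚ_p, the Mahler coefficients a_n(g) = Σ_{i=0}^{n} (-1)^i (n choose i) g(n-i) tend to 0 as n → ∞, and g(x) = Σ_{n≥0} a_n(g) (x choose n) for all x ∈ ℤ_p; moreover inf_{x∈ℤ_p} v_p(g(x)) = inf_{n≥0} v_p(a_n(g)). -/
open Finset Filter

/-- The binomial polynomial `x (x-1) ⋯ (x-n+1) / n!` at `x ∈ ℤ_p`. -/
noncomputable def binomPoly (p : ℕ) [Fact p.Prime] (x : ℤ_[p]) (n : ℕ) : ℚ_[p] :=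
  (∏ i ∈ Finset.range n, ((x : ℚ_[p]) - (i : ℚ_[p]))) / (n.factorial : ℚ_[p])

theorem coeff_eq_fwdDiff (p : ℕ) [Fact p.Prime] (g : ℤ_[p] → ℚ_[p]) (n : ℕ) :
    (∑ i ∈ Finset.range (n + 1),
        (-1 : ℚ_[p]) ^ i * (n.choose i : ℚ_[p]) * g ((n - i : ℕ) : ℤ_[p]))
      = (fwdDiff (1 : ℤ_[p]))^[n] g 0 := by
  rw [fwdDiff_iter_eq_sum_shift, ← Finset.sum_range_reflect]
  refine Finset.sum_congr rfl fun i hi => ?_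
  rw [Finset.mem_range, Nat.lt_succ_iff] at hi
  simp only [Nat.add_sub_cancel]
  rw [Nat.sub_sub_self hi, Nat.choose_symm hi, zsmul_eq_mul]
  push_cast
  ring_nf

theorem binomPoly_eq_mahler (p : ℕ) [Fact p.Prime] (x : ℤ_[p]) (n : ℕ) :
    binomPoly p x n = mahler n x := by
  rw [mahler_apply, binomPoly]
  have hA : (descPochhammer ℤ n).smeval x = ∏ i ∈ Finset.range n, (x - (i : ℤ_[p])) := by
    induction n with
    | zero => simp [descPochhammer_zero, Polynomial.smeval_one]
    | succ m ih =>
      rw [descPochhammer_succ_right, Polynomial.smeval_mul, ih, Finset.prod_range_succ,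
        Polynomial.smeval_sub, Polynomial.smeval_X, Polynomial.smeval_natCast]
      simp
  have h2 := Ring.descPochhammer_eq_factorial_smul_choose (R := ℤ_[p]) x n
  rw [hA] at h2
  have h3 : (∏ i ∈ Finset.range n, ((x : ℚ_[p]) - (i : ℚ_[p])))
      = (n.factorial : ℚ_[p]) * ((Ring.choose x n : ℤ_[p]) : ℚ_[p]) := by
    have hcoe : ((∏ i ∈ Finset.range n, (x - (i : ℤ_[p])) : ℤ_[p]) : ℚ_[p])
        = ∏ i ∈ Finset.range n, ((x : ℚ_[p]) - (i : ℚ_[p])) := by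
      exact (map_prod (PadicInt.Coe.ringHom (p := p)) _ _).trans
        (Finset.prod_congr rfl fun i _ => rfl)
    have := congrArg (fun z : ℤ_[p] => (z : ℚ_[p])) h2
    simp only [hcoe] at this
    rw [this]
    push_cast [nsmul_eq_mul]
    ring
  have hfac : (n.factorial : ℚ_[p]) ≠ 0 := Nat.cast_ne_zero.mpr n.factorial_ne_zero
  rw [h3, mul_div_cancel_left₀ _ hfac]

instance padicInt_isBoundedSMul_padic (p : ℕ) [Fact p.Prime] : IsBoundedSMul ℤ_[p] ℚ_[p] :=
  IsBoundedSMul.of_norm_smul_le fun r x => by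
    rw [Algebra.smul_def, PadicInt.algebraMap_apply, norm_mul, PadicInt.norm_def]

/-- **Mahler's theorem.** For a continuous `g : ℤ_p → ℚ_p`, the Mahler coefficients
`a_n(g) = Σ_{i=0}^n (-1)^i (n choose i) g(n-i)` tend to `0`, the Mahler series
`Σ a_n(g) (x choose n)` converges to `g(x)` for every `x ∈ ℤ_p`, and
`inf_x v_p(g(x)) = inf_n v_p(a_n(g))` (expressed via sup of norms). -/
theorem mahler_theorem (p : ℕ) [Fact p.Prime] (g : ℤ_[p] → ℚ_[p]) (hg : Continuous g) :
    Tendsto (fun n : ℕ => ∑ i ∈ Finset.range (n + 1),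
        (-1 : ℚ_[p]) ^ i * (n.choose i : ℚ_[p]) * g ((n - i : ℕ) : ℤ_[p]))
      atTop (nhds 0) ∧
    (∀ x : ℤ_[p], HasSum
      (fun n : ℕ => (∑ i ∈ Finset.range (n + 1),
          (-1 : ℚ_[p]) ^ i * (n.choose i : ℚ_[p]) * g ((n - i : ℕ) : ℤ_[p])) * binomPoly p x n)
      (g x)) ∧
    (⨆ x : ℤ_[p], ‖g x‖) = ⨆ n : ℕ, ‖∑ i ∈ Finset.range (n + 1),
        (-1 : ℚ_[p]) ^ i * (n.choose i : ℚ_[p]) * g ((n - i : ℕ) : ℤ_[p])‖ := by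
  set f : C(ℤ_[p], ℚ_[p]) := ⟨g, hg⟩ with hf
  have hco : ∀ n, (∑ i ∈ Finset.range (n + 1),
      (-1 : ℚ_[p]) ^ i * (n.choose i : ℚ_[p]) * g ((n - i : ℕ) : ℤ_[p]))
      = (fwdDiff (1 : ℤ_[p]))^[n] (⇑f) 0 := fun n => coeff_eq_fwdDiff p g n
  refine ⟨?_, ?_, ?_⟩
  · simpa only [hco] using PadicInt.fwdDiff_tendsto_zero f
  · intro x
    have H := (ContinuousMap.evalCLM (R := ℚ_[p]) x).hasSum (PadicInt.hasSum_mahler f)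
    have : (fun n => (ContinuousMap.evalCLM (R := ℚ_[p]) x)
        (PadicInt.mahlerTerm ((fwdDiff (1 : ℤ_[p]))^[n] (⇑f) 0) n))
        = fun n : ℕ => (∑ i ∈ Finset.range (n + 1),
          (-1 : ℚ_[p]) ^ i * (n.choose i : ℚ_[p]) * g ((n - i : ℕ) : ℤ_[p])) * binomPoly p x n := by
      funext n
      show (PadicInt.mahlerTerm ((fwdDiff (1 : ℤ_[p]))^[n] (⇑f) 0) n) x = _
      rw [PadicInt.mahlerTerm_apply, binomPoly_eq_mahler, hco, Algebra.smul_def, PadicInt.algebraMap_apply, mul_comm]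
    rw [this] at H
    exact H
  · have h1 : (⨆ x : ℤ_[p], ‖g x‖) = ‖f‖ := (f.norm_eq_iSup_norm).symm
    have h2 := (PadicInt.mahlerEquiv ℚ_[p]).norm_map f
    rw [h1, ← h2, ← ZeroAtInftyContinuousMap.norm_toBCF_eq_norm,
      BoundedContinuousFunction.norm_eq_iSup_norm]
    refine iSup_congr fun n => ?_
    rw [hco n]
    rfl
end

section
/- The locally constant indicator functions 1_{i + p^{l(i)} ℤ_p} for 0 ≤ i ≤ p^h - 1, where l(i) is the smallest n ≥ 0 with p^n > i, form a basis of the ℚ_p-vector space of functions ℤ_p → ℚ_p that are constant on each coset a + p^h ℤ_p. -/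
/-- `l i` is the smallest `n ≥ 0` with `p^n > i`: `l 0 = 0` and `l i = ⌊log_p i⌋ + 1`. -/
def lExp (p : ℕ) (i : ℕ) : ℕ := if i = 0 then 0 else Nat.log p i + 1

/-- The indicator function of the coset `i + p^(l i) ℤ_p` inside `ℤ_p`. -/
noncomputable def cosetIndicator (p : ℕ) [Fact p.Prime] (i : ℕ) : ℤ_[p] → ℚ_[p] :=
  fun x => if ‖x - (i : ℤ_[p])‖ ≤ (p : ℝ) ^ (-(lExp p i : ℤ)) then 1 else 0

section aux
variable {p : ℕ} [Fact p.Prime]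

lemma lt_pow_lExp (i : ℕ) : i < p ^ lExp p i := by
  unfold lExp
  split
  · simp_all
  · exact Nat.lt_pow_succ_log_self (Fact.out (p := p.Prime)).one_lt i

lemma lExp_le {h i : ℕ} (hi : i < p ^ h) : lExp p i ≤ h := by
  unfold lExp
  split
  · omega
  · have := (Nat.log_lt_iff_lt_pow (Fact.out (p := p.Prime)).one_lt (by assumption)).mpr hi
    omega

lemma cosetIndicator_nat (i j : ℕ) :
    cosetIndicator p i (j : ℤ_[p])
      = if ((p : ℤ) ^ (lExp p i)) ∣ ((j : ℤ) - i) then 1 else 0 := by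
  unfold cosetIndicator
  have : (j : ℤ_[p]) - (i : ℤ_[p]) = (((j : ℤ) - (i : ℤ) : ℤ) : ℤ_[p]) := by push_cast; ring
  rw [this]
  simp only [PadicInt.norm_int_le_pow_iff_dvd]

lemma cosetIndicator_diag (i : ℕ) : cosetIndicator p i (i : ℤ_[p]) = 1 := by
  rw [cosetIndicator_nat]
  simp

lemma cosetIndicator_upper {i j : ℕ} (hij : j < i) : cosetIndicator p i (j : ℤ_[p]) = 0 := by
  have hnot : ¬ ((p : ℤ) ^ (lExp p i)) ∣ ((j : ℤ) - i) := by
    intro hdvd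
    have h1 : ((p : ℤ) ^ lExp p i) ∣ ((i : ℤ) - j) := by
      have := hdvd.neg_right
      simpa using this
    have h2 : ((p : ℤ) ^ lExp p i) ≤ (i : ℤ) - j := Int.le_of_dvd (by omega) h1
    have h3 := lt_pow_lExp (p := p) i
    have : ((i : ℤ)) < (p : ℤ) ^ lExp p i := by exact_mod_cast h3
    omega
  rw [cosetIndicator_nat, if_neg hnot]

lemma cosetIndicator_locConst {h i : ℕ} (hi : i < p ^ h) {a b : ℤ_[p]}
    (hab : ‖a - b‖ ≤ (p : ℝ) ^ (-(h : ℤ))) :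
    cosetIndicator p i a = cosetIndicator p i b := by
  have hp1 : (1 : ℝ) < p := by exact_mod_cast (Fact.out (p := p.Prime)).one_lt
  have hle : (p : ℝ) ^ (-(h : ℤ)) ≤ (p : ℝ) ^ (-(lExp p i : ℤ)) := by
    apply zpow_le_zpow_right₀ hp1.le
    have := lExp_le (p := p) hi
    omega
  have hab' : ‖a - b‖ ≤ (p : ℝ) ^ (-(lExp p i : ℤ)) := hab.trans hle
  have hba' : ‖b - a‖ ≤ (p : ℝ) ^ (-(lExp p i : ℤ)) := by
    rw [show b - a = -(a - b) by ring, norm_neg]; exact hab'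
  have key : ∀ x y : ℤ_[p], ‖x - y‖ ≤ (p : ℝ) ^ (-(lExp p i : ℤ)) →
      ‖y - (i : ℤ_[p])‖ ≤ (p : ℝ) ^ (-(lExp p i : ℤ)) →
      ‖x - (i : ℤ_[p])‖ ≤ (p : ℝ) ^ (-(lExp p i : ℤ)) := by
    intro x y h1 h2
    have : x - (i : ℤ_[p]) = (x - y) + (y - (i : ℤ_[p])) := by ring
    rw [this]
    exact le_trans (PadicInt.nonarchimedean _ _) (max_le h1 h2)
  unfold cosetIndicator
  by_cases hb : ‖b - (i : ℤ_[p])‖ ≤ (p : ℝ) ^ (-(lExp p i : ℤ))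
  · rw [if_pos (key a b hab' hb), if_pos hb]
  · rw [if_neg (fun ha => hb (key b a hba' ha)), if_neg hb]

noncomputable def cVec (p : ℕ) [Fact p.Prime] (g : ℤ_[p] → ℚ_[p]) : ℕ → ℚ_[p]
  | j => g (j : ℤ_[p]) -
      ∑ i ∈ (Finset.range j).attach, cVec p g i * cosetIndicator p (i : ℕ) (j : ℤ_[p])
  termination_by j => j
  decreasing_by exact Finset.mem_range.mp i.2

lemma cVec_spec (g : ℤ_[p] → ℚ_[p]) (j : ℕ) :
    ∑ i ∈ Finset.range (j + 1), cVec p g i * cosetIndicator p i (j : ℤ_[p]) = g (j : ℤ_[p]) := by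
  rw [Finset.sum_range_succ, cosetIndicator_diag, mul_one, cVec]
  rw [← Finset.sum_attach (Finset.range j)
      (fun i => cVec p g i * cosetIndicator p i (j : ℤ_[p]))]
  ring

lemma sum_trunc {N : ℕ} (c : ℕ → ℚ_[p]) {j : ℕ} (hj : j < N) :
    ∑ i ∈ Finset.range N, c i * cosetIndicator p i (j : ℤ_[p])
      = ∑ i ∈ Finset.range (j + 1), c i * cosetIndicator p i (j : ℤ_[p]) := by
  refine (Finset.sum_subset (by intro x hx; simp at hx ⊢; omega) ?_).symm
  intro x hx hnx
  simp only [Finset.mem_range] at hx hnx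
  rw [cosetIndicator_upper (by omega), mul_zero]
end aux

/-- The indicator functions `1_{i + p^{l(i)}ℤ_p}`, `0 ≤ i ≤ p^h - 1`, form a basis of the
space `LC_h(ℤ_p, ℚ_p)` of functions constant on each coset `a + p^h ℤ_p`. -/
theorem cosetIndicator_basis_of_LC (p : ℕ) [Fact p.Prime] (h : ℕ) :
    LinearIndependent ℚ_[p] (fun i : Fin (p ^ h) => cosetIndicator p (i : ℕ)) ∧
    (Submodule.span ℚ_[p]
        (Set.range fun i : Fin (p ^ h) => cosetIndicator p (i : ℕ)) : Set (ℤ_[p] → ℚ_[p]))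
      = {g : ℤ_[p] → ℚ_[p] |
          ∀ a b : ℤ_[p], ‖a - b‖ ≤ (p : ℝ) ^ (-(h : ℤ)) → g a = g b} := by
  set N := p ^ h with hN
  constructor
  · rw [Fintype.linearIndependent_iff]
    intro c hc
    set c' : ℕ → ℚ_[p] := fun i => if hi : i < N then c ⟨i, hi⟩ else 0 with hc'
    have he : ∀ j : Fin N, ∑ i ∈ Finset.range N, c' i * cosetIndicator p i ((j : ℕ) : ℤ_[p]) = 0 := by
      intro j
      have h1 := congrFun hc ((j : ℕ) : ℤ_[p])
      simp only [Finset.sum_apply, Pi.smul_apply, smul_eq_mul, Pi.zero_apply] at h1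
      rw [← h1, ← Fin.sum_univ_eq_sum_range
        (fun i => c' i * cosetIndicator p i ((j : ℕ) : ℤ_[p]))]
      exact Finset.sum_congr rfl fun i _ => by simp [hc', i.isLt]
    have hz : ∀ n, n < N → c' n = 0 := by
      intro n
      induction n using Nat.strong_induction_on with
      | _ n ih =>
        intro hn
        have := he ⟨n, hn⟩
        rw [sum_trunc c' hn, Finset.sum_range_succ, cosetIndicator_diag, mul_one,
          Finset.sum_eq_zero (fun i hi => by
            rw [ih i (Finset.mem_range.mp hi) (by have := Finset.mem_range.mp hi; omega),
              zero_mul])] at this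
        simpa using this
    intro i
    have := hz i i.isLt
    simpa [hc', i.isLt] using this
  · ext g
    simp only [SetLike.mem_coe, Set.mem_setOf_eq]
    constructor
    · intro hg
      have hsub : Submodule.span ℚ_[p]
          (Set.range fun i : Fin N => cosetIndicator p (i : ℕ)) ≤
          { carrier := {g : ℤ_[p] → ℚ_[p] |
              ∀ a b : ℤ_[p], ‖a - b‖ ≤ (p : ℝ) ^ (-(h : ℤ)) → g a = g b}
            add_mem' := fun hf hg a b hab => by
              simp only [Set.mem_setOf_eq] at *
              simp [hf a b hab, hg a b hab]
            zero_mem' := fun a b _ => rfl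
            smul_mem' := fun r f hf a b hab => by
              simp only [Set.mem_setOf_eq] at *
              simp [hf a b hab] } := by
        rw [Submodule.span_le]
        rintro _ ⟨i, rfl⟩
        intro a b hab
        exact cosetIndicator_locConst i.isLt hab
      exact hsub hg
    · intro hg
      set c := cVec p g with hcdef
      have hgeq : g = ∑ i : Fin N, c i • cosetIndicator p (i : ℕ) := by
        funext x
        set j := x.appr h with hj
        have hjN : j < N := x.appr_lt h
        have hxj : ‖x - (j : ℤ_[p])‖ ≤ (p : ℝ) ^ (-(h : ℤ)) :=
          ((x - (j : ℤ_[p])).norm_le_pow_iff_mem_span_pow h).mpr (x.appr_spec h)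
        have h1 : (∑ i : Fin N, c i • cosetIndicator p (i : ℕ)) x
            = ∑ i : Fin N, c i * cosetIndicator p (i : ℕ) ((j : ℕ) : ℤ_[p]) := by
          simp only [Finset.sum_apply, Pi.smul_apply, smul_eq_mul]
          refine Finset.sum_congr rfl fun i _ => ?_
          rw [cosetIndicator_locConst i.isLt hxj]
        rw [h1, Fin.sum_univ_eq_sum_range (fun i => c i * cosetIndicator p i ((j : ℕ) : ℤ_[p])),
          sum_trunc c hjN, cVec_spec]
        exact hg x (j : ℤ_[p]) hxj
      rw [hgeq]
      exact Submodule.sum_mem _ fun i _ =>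
        Submodule.smul_mem _ _ (Submodule.subset_span ⟨i, rfl⟩)
end

section
/- Let r ≥ 0 and h ∈ ℕ, and let g : ℤ_p → E be locally analytic of radius p^{-h}, i.e. on each ball a + p^h ℤ_p one has g(x) = Σ_{k≥0} ã_k(g,a) ((x-a)/p^h)^k with v_p(ã_k(g,a)) → ∞ uniformly. Then g is of class C^r, i.e. for ε_{g,r}(x,y) = g(x+y) − Σ_{j=0}^{⌊r⌋} g^{(j)}(x) y^j / j!, the quantity inf_{x ∈ ℤ_p, y ∈ p^hℤ_p}(v_p(ε_{g,r}(x,y)) − rh') tends to ∞ as h' → ∞. Moreover v'_{C^r}(g) ≥ v_{LA_h}(g) − rh, where v_{LA_h}(g) = inf_{a,k} v_p(ã_k(g,a)). -/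
/-!
On the ball `x + p^h ℤ_p` the expansion of `g` around `x` is a power series in `t = y / p^h`,
and its `j`-th term is exactly the `j`-th Taylor term once `g^{(j)}(x) := j! ã_j(g,x) / p^{hj}`.
By the ultrametric inequality the Taylor remainder of order `⌊r⌋` is bounded by the largest
omitted term, `p^{-c} |t|^{⌊r⌋+1} ≤ p^{-c} |t|^r` when `|t| ≤ 1`; when `|t| > 1`, `g(x+y)` and
all Taylor terms are already `≤ p^{-c} |t|^r`. Since `|t| = p^h |y|`, both claims follow.
-/

open Finset

section Ultrametric

theorem IsUltrametricDist.norm_sub_sum_range_le_of_hasSum {M : Type*}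
    [NormedAddCommGroup M] [IsUltrametricDist M] {f : ℕ → M} {s : M} (hf : HasSum f s)
    (n : ℕ) {B : ℝ} (hB : 0 ≤ B) (hfB : ∀ k ≥ n, ‖f k‖ ≤ B) :
    ‖s - ∑ k ∈ range n, f k‖ ≤ B := by
  rw [← ((hasSum_nat_add_iff' n).2 hf).tsum_eq]
  exact IsUltrametricDist.norm_tsum_le_of_forall_le_of_nonneg hB fun k => hfB _ le_add_self

variable {E : Type*} [NormedField E] [IsUltrametricDist E]

theorem IsUltrametricDist.norm_sub_sum_range_le_of_norm_le_one {a : ℕ → E} {t s : E} {M : ℝ}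
    (hs : HasSum (fun k => a k * t ^ k) s) (ha : ∀ k, ‖a k‖ ≤ M) (ht : ‖t‖ ≤ 1) (n : ℕ) :
    ‖s - ∑ k ∈ range n, a k * t ^ k‖ ≤ M * ‖t‖ ^ n := by
  have hM : 0 ≤ M := (norm_nonneg _).trans (ha 0)
  refine norm_sub_sum_range_le_of_hasSum hs n (by positivity) fun k hk => ?_
  rw [norm_mul, norm_pow]
  exact mul_le_mul (ha k) (pow_le_pow_of_le_one (norm_nonneg _) ht hk) (by positivity) hM

theorem IsUltrametricDist.norm_sub_sum_range_le_of_one_le_norm {a : ℕ → E} {t s : E}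
    {M r : ℝ} {n : ℕ} (hs : ‖s‖ ≤ M) (ha : ∀ k, ‖a k‖ ≤ M) (ht : 1 ≤ ‖t‖) (hr : 0 ≤ r)
    (hn : ∀ k < n, (k : ℝ) ≤ r) :
    ‖s - ∑ k ∈ range n, a k * t ^ k‖ ≤ M * ‖t‖ ^ r := by
  have hM : 0 ≤ M := (norm_nonneg _).trans hs
  rw [sub_eq_add_neg]
  refine (norm_add_le_max _ _).trans (max_le ?_ ?_)
  · exact hs.trans (le_mul_of_one_le_right hM (Real.one_le_rpow ht hr))
  · rw [norm_neg]
    refine norm_sum_le_of_forall_le_of_nonneg (by positivity) fun k hk => ?_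
    rw [norm_mul, norm_pow, ← Real.rpow_natCast]
    exact mul_le_mul (ha k) (Real.rpow_le_rpow_of_exponent_le ht (hn k (mem_range.1 hk)))
      (by positivity) hM

theorem IsUltrametricDist.norm_sub_sum_range_floor_le {a : ℕ → E} {t s : E} {M r : ℝ}
    (hr : 0 ≤ r) (hsum : ‖t‖ ≤ 1 → HasSum (fun k => a k * t ^ k) s) (hs : ‖s‖ ≤ M)
    (ha : ∀ k, ‖a k‖ ≤ M) :
    ‖s - ∑ k ∈ range (⌊r⌋₊ + 1), a k * t ^ k‖ ≤ M * ‖t‖ ^ r := by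
  rcases le_total ‖t‖ 1 with ht | ht
  · refine (norm_sub_sum_range_le_of_norm_le_one (hsum ht) ha ht _).trans ?_
    have hM : 0 ≤ M := (norm_nonneg _).trans hs
    rw [← Real.rpow_natCast]
    exact mul_le_mul_of_nonneg_left (Real.rpow_le_rpow_of_exponent_ge' (norm_nonneg _) ht hr
      (by exact_mod_cast (Nat.lt_floor_add_one r).le)) hM
  · exact norm_sub_sum_range_le_of_one_le_norm hs ha ht hr fun k hk =>
      (Nat.le_floor_iff hr).1 (Nat.lt_succ_iff.1 hk)

end Ultrametric

namespace PadicLocallyAnalytic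

variable {p : ℕ} [Fact p.Prime] {E : Type*} [NormedField E] [Algebra ℚ_[p] E]

theorem isUltrametricDist_of_norm_algebraMap (hE : ∀ q : ℚ_[p], ‖algebraMap ℚ_[p] E q‖ = ‖q‖) :
    IsUltrametricDist E :=
  IsUltrametricDist.isUltrametricDist_of_forall_norm_natCast_le_one fun n => by
    rw [← map_natCast (algebraMap ℚ_[p] E), hE]
    exact_mod_cast Padic.norm_int_le_one n

def HasBallExpansion (h : ℕ) (g : ℤ_[p] → E) (A : ℤ_[p] → ℕ → E) : Prop :=
  ∀ a x : ℤ_[p], ‖x - a‖ ≤ (p : ℝ) ^ (-(h : ℤ)) →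
    HasSum (fun k : ℕ =>
      A a k * (algebraMap ℚ_[p] E (((x - a : ℤ_[p]) : ℚ_[p]) / (p : ℚ_[p]) ^ h)) ^ k) (g x)

variable (E) in
noncomputable def ballCoord (h : ℕ) (y : ℤ_[p]) : E :=
  algebraMap ℚ_[p] E ((y : ℚ_[p]) / (p : ℚ_[p]) ^ h)

noncomputable def expansionDeriv (h : ℕ) (A : ℤ_[p] → ℕ → E) (j : ℕ) (x : ℤ_[p]) : E :=
  algebraMap ℚ_[p] E ((j.factorial : ℚ_[p]) / ((p : ℚ_[p]) ^ h) ^ j) * A x j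

noncomputable def taylorPoly (D : ℕ → ℤ_[p] → E) (n : ℕ) (x y : ℤ_[p]) : E :=
  ∑ j ∈ range (n + 1), algebraMap ℚ_[p] E (((y : ℚ_[p]) ^ j) / (j.factorial : ℚ_[p])) * D j x

theorem norm_ballCoord (hE : ∀ q : ℚ_[p], ‖algebraMap ℚ_[p] E q‖ = ‖q‖) (h : ℕ) (y : ℤ_[p]) :
    ‖ballCoord E h y‖ = ‖y‖ * (p : ℝ) ^ h := by
  rw [ballCoord, hE, norm_div, norm_pow, Padic.norm_p, ← PadicInt.norm_def, inv_pow,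
    div_inv_eq_mul]

theorem norm_ballCoord_le_one_iff (hE : ∀ q : ℚ_[p], ‖algebraMap ℚ_[p] E q‖ = ‖q‖) (h : ℕ)
    (y : ℤ_[p]) : ‖ballCoord E h y‖ ≤ 1 ↔ ‖y‖ ≤ (p : ℝ) ^ (-(h : ℤ)) := by
  have hp : (0 : ℝ) < (p : ℝ) ^ h := pow_pos (Nat.cast_pos.2 (Fact.out : p.Prime).pos) h
  rw [norm_ballCoord hE, zpow_neg, zpow_natCast, ← one_div, le_div_iff₀ hp]

theorem taylorPoly_expansionDeriv (h : ℕ) (A : ℤ_[p] → ℕ → E) (n : ℕ) (x y : ℤ_[p]) :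
    taylorPoly (expansionDeriv h A) n x y = ∑ j ∈ range (n + 1), A x j * ballCoord E h y ^ j := by
  refine sum_congr rfl fun j _ => ?_
  have hj : (j.factorial : ℚ_[p]) ≠ 0 := Nat.cast_ne_zero.2 j.factorial_ne_zero
  have hcoeff : (y : ℚ_[p]) ^ j / j.factorial * (j.factorial / ((p : ℚ_[p]) ^ h) ^ j)
      = ((y : ℚ_[p]) / (p : ℚ_[p]) ^ h) ^ j := by
    rw [div_mul_div_comm, mul_comm ((y : ℚ_[p]) ^ j), mul_div_mul_left _ _ hj, div_pow]
  rw [expansionDeriv, ballCoord, ← mul_assoc, ← map_mul, hcoeff, map_pow, mul_comm]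

theorem HasBallExpansion.apply_eq {h : ℕ} {g : ℤ_[p] → E} {A : ℤ_[p] → ℕ → E}
    (hg : HasBallExpansion h g A) (a : ℤ_[p]) : g a = A a 0 := by
  have h0 := hg a a (by simp)
  simp only [sub_self, PadicInt.coe_zero, zero_div, map_zero] at h0
  simpa using h0.unique (hasSum_single 0 fun k hk => by simp [zero_pow hk])

theorem HasBallExpansion.hasSum_ballCoord {h : ℕ} {g : ℤ_[p] → E} {A : ℤ_[p] → ℕ → E}
    (hg : HasBallExpansion h g A) (hE : ∀ q : ℚ_[p], ‖algebraMap ℚ_[p] E q‖ = ‖q‖)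
    (x y : ℤ_[p]) (hy : ‖ballCoord E h y‖ ≤ 1) :
    HasSum (fun k => A x k * ballCoord E h y ^ k) (g (x + y)) := by
  have hxy := hg x (x + y) (by rwa [add_sub_cancel_left, ← norm_ballCoord_le_one_iff hE])
  rwa [add_sub_cancel_left] at hxy

theorem norm_factorial_inv_mul_expansionDeriv_le
    (hE : ∀ q : ℚ_[p], ‖algebraMap ℚ_[p] E q‖ = ‖q‖) {A : ℤ_[p] → ℕ → E} {c : ℝ}
    (hc : ∀ a k, ‖A a k‖ ≤ (p : ℝ) ^ (-c)) {r : ℝ} {j : ℕ} (hj : (j : ℝ) ≤ r) (h : ℕ)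
    (x : ℤ_[p]) :
    ‖algebraMap ℚ_[p] E ((j.factorial : ℚ_[p])⁻¹) * expansionDeriv h A j x‖
      ≤ (p : ℝ) ^ (-(c - r * h)) := by
  have hp : (1 : ℝ) < p := by exact_mod_cast (Fact.out : p.Prime).one_lt
  have hj0 : (j.factorial : ℚ_[p]) ≠ 0 := Nat.cast_ne_zero.2 j.factorial_ne_zero
  rw [expansionDeriv, ← mul_assoc, ← map_mul, ← mul_div_assoc, inv_mul_cancel₀ hj0, one_div,
    norm_mul, hE, norm_inv, norm_pow, norm_pow, Padic.norm_p, inv_pow, inv_pow, inv_inv]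
  calc ((p : ℝ) ^ h) ^ j * ‖A x j‖ ≤ ((p : ℝ) ^ h) ^ j * (p : ℝ) ^ (-c) := by gcongr; exact hc x j
    _ = (p : ℝ) ^ (-c + j * h) := by
      rw [Real.rpow_add (by positivity), ← pow_mul, ← Real.rpow_natCast, mul_comm]
      push_cast; ring_nf
    _ ≤ (p : ℝ) ^ (-(c - r * h)) := by
      refine Real.rpow_le_rpow_of_exponent_le hp.le ?_
      nlinarith [(Nat.cast_nonneg h : (0 : ℝ) ≤ h)]

namespace HasBallExpansion

variable {h : ℕ} {g : ℤ_[p] → E} {A : ℤ_[p] → ℕ → E}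

theorem norm_sub_taylorPoly_le_pow (hg : HasBallExpansion h g A)
    (hE : ∀ q : ℚ_[p], ‖algebraMap ℚ_[p] E q‖ = ‖q‖) {M : ℝ} (hA : ∀ a k, ‖A a k‖ ≤ M) (n : ℕ)
    (x y : ℤ_[p]) (hy : ‖y‖ ≤ (p : ℝ) ^ (-(h : ℤ))) :
    ‖g (x + y) - taylorPoly (expansionDeriv h A) n x y‖ ≤ M * (‖y‖ * (p : ℝ) ^ h) ^ (n + 1) := by
  have := isUltrametricDist_of_norm_algebraMap hE
  have ht := (norm_ballCoord_le_one_iff hE h y).2 hy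
  rw [taylorPoly_expansionDeriv, ← norm_ballCoord hE]
  exact IsUltrametricDist.norm_sub_sum_range_le_of_norm_le_one (hg.hasSum_ballCoord hE x y ht)
    (hA x) ht _

theorem norm_sub_taylorPoly_floor_le (hg : HasBallExpansion h g A)
    (hE : ∀ q : ℚ_[p], ‖algebraMap ℚ_[p] E q‖ = ‖q‖) {c : ℝ}
    (hc : ∀ a k, ‖A a k‖ ≤ (p : ℝ) ^ (-c)) {r : ℝ} (hr : 0 ≤ r) (x y : ℤ_[p]) :
    ‖g (x + y) - taylorPoly (expansionDeriv h A) ⌊r⌋₊ x y‖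
      ≤ (p : ℝ) ^ (-(c - r * h)) * ‖y‖ ^ r := by
  have := isUltrametricDist_of_norm_algebraMap hE
  have hp : (0 : ℝ) < p := by exact_mod_cast (Fact.out : p.Prime).pos
  rw [taylorPoly_expansionDeriv]
  refine (IsUltrametricDist.norm_sub_sum_range_floor_le hr (hg.hasSum_ballCoord hE x y)
    (by rw [hg.apply_eq]; exact hc _ 0) (hc x)).trans_eq ?_
  rw [norm_ballCoord hE, Real.mul_rpow (norm_nonneg _) (by positivity), ← Real.rpow_natCast,
    ← Real.rpow_mul hp.le, mul_comm (h : ℝ) r, neg_sub, Real.rpow_sub hp, Real.rpow_neg hp.le]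
  ring

theorem exists_norm_sub_taylorPoly_floor_le (hg : HasBallExpansion h g A)
    (hE : ∀ q : ℚ_[p], ‖algebraMap ℚ_[p] E q‖ = ‖q‖) {c : ℝ}
    (hc : ∀ a k, ‖A a k‖ ≤ (p : ℝ) ^ (-c)) (r C : ℝ) :
    ∃ H : ℕ, ∀ h' : ℕ, H ≤ h' → ∀ x y : ℤ_[p], ‖y‖ ≤ (p : ℝ) ^ (-(h' : ℤ)) →
      ‖g (x + y) - taylorPoly (expansionDeriv h A) ⌊r⌋₊ x y‖ ≤ (p : ℝ) ^ (-(C + r * h')) := by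
  have hp : (1 : ℝ) < p := by exact_mod_cast (Fact.out : p.Prime).one_lt
  set N : ℝ := ⌊r⌋₊ + 1 with hNdef
  have hN : 0 < N - r := sub_pos.2 (Nat.lt_floor_add_one r)
  refine ⟨max h ⌈(C - c + N * h) / (N - r)⌉₊, fun h' hH x y hy => ?_⟩
  have hyh : ‖y‖ ≤ (p : ℝ) ^ (-(h : ℤ)) :=
    hy.trans (zpow_le_zpow_right₀ hp.le (by have := (le_max_left _ _).trans hH; omega))
  have ht : ‖y‖ * (p : ℝ) ^ h ≤ (p : ℝ) ^ ((h : ℝ) - h') := by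
    rw [Real.rpow_sub (by positivity), Real.rpow_natCast, Real.rpow_natCast, div_eq_inv_mul]
    gcongr
    simpa using hy
  have hexponent : -c + ((h : ℝ) - h') * N ≤ -(C + r * h') := by
    have hceil : (C - c + N * h) / (N - r) ≤ h' :=
      (Nat.le_ceil _).trans (by exact_mod_cast (le_max_right _ _).trans hH)
    rw [div_le_iff₀ hN] at hceil
    nlinarith
  calc ‖g (x + y) - taylorPoly (expansionDeriv h A) ⌊r⌋₊ x y‖
      ≤ (p : ℝ) ^ (-c) * (‖y‖ * (p : ℝ) ^ h) ^ (⌊r⌋₊ + 1) :=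
        hg.norm_sub_taylorPoly_le_pow hE hc _ x y hyh
    _ ≤ (p : ℝ) ^ (-c) * ((p : ℝ) ^ ((h : ℝ) - h')) ^ (⌊r⌋₊ + 1) := by gcongr
    _ = (p : ℝ) ^ (-c + ((h : ℝ) - h') * N) := by
      rw [← Real.rpow_natCast, ← Real.rpow_mul (by positivity), Real.rpow_add (by positivity),
        hNdef]
      push_cast; rfl
    _ ≤ (p : ℝ) ^ (-(C + r * h')) := Real.rpow_le_rpow_of_exponent_le hp.le hexponent

end HasBallExpansion

end PadicLocallyAnalytic

open PadicLocallyAnalytic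

theorem locallyAnalytic_isCr_and_val_bound_general (p : ℕ) [Fact p.Prime]
    (E : Type*) [NormedField E] [Algebra ℚ_[p] E]
    (hE : ∀ q : ℚ_[p], ‖algebraMap ℚ_[p] E q‖ = ‖q‖)
    (r : ℝ) (hr : 0 ≤ r) (h : ℕ) (g : ℤ_[p] → E) (A : ℤ_[p] → ℕ → E)
    (hexp : ∀ a x : ℤ_[p], ‖x - a‖ ≤ (p : ℝ) ^ (-(h : ℤ)) →
      HasSum (fun k : ℕ =>
        A a k * (algebraMap ℚ_[p] E (((x - a : ℤ_[p]) : ℚ_[p]) / (p : ℚ_[p]) ^ h)) ^ k) (g x))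
    (c : ℝ) (hc : ∀ (a : ℤ_[p]) (k : ℕ), ‖A a k‖ ≤ (p : ℝ) ^ (-c)) :
    ∃ D : ℕ → ℤ_[p] → E, D 0 = g ∧
      -- `g` is of class `C^r`: `C_{g,r}(h') → ∞` as `h' → ∞`
      (∀ C : ℝ, ∃ H : ℕ, ∀ h' : ℕ, H ≤ h' → ∀ x y : ℤ_[p],
          ‖y‖ ≤ (p : ℝ) ^ (-(h' : ℤ)) →
          ‖g (x + y) - ∑ j ∈ Finset.range (⌊r⌋₊ + 1),
              algebraMap ℚ_[p] E (((y : ℚ_[p]) ^ j) / (j.factorial : ℚ_[p])) * D j x‖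
            ≤ (p : ℝ) ^ (-(C + r * h'))) ∧
      -- first part of `v'_{C^r}(g) ≥ c − r h`
      (∀ j ≤ ⌊r⌋₊, ∀ x : ℤ_[p],
          ‖algebraMap ℚ_[p] E ((j.factorial : ℚ_[p])⁻¹) * D j x‖ ≤ (p : ℝ) ^ (-(c - r * h))) ∧
      -- second part of `v'_{C^r}(g) ≥ c − r h`
      (∀ x y : ℤ_[p],
          ‖g (x + y) - ∑ j ∈ Finset.range (⌊r⌋₊ + 1),
              algebraMap ℚ_[p] E (((y : ℚ_[p]) ^ j) / (j.factorial : ℚ_[p])) * D j x‖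
            ≤ (p : ℝ) ^ (-(c - r * h)) * ‖y‖ ^ r) := by
  have hg : HasBallExpansion h g A := hexp
  refine ⟨expansionDeriv h A, ?_, hg.exists_norm_sub_taylorPoly_floor_le hE hc r,
    fun j hj => norm_factorial_inv_mul_expansionDeriv_le hE hc ((Nat.le_floor_iff hr).1 hj) h,
    hg.norm_sub_taylorPoly_floor_le hE hc hr⟩
  funext x
  simp [expansionDeriv, hg.apply_eq x]

/-- Locally analytic functions of radius `p^{-h}` on `ℤ_p` are of class `C^r` for every
`r ≥ 0`, with `v'_{C^r}(g) ≥ v_{LA_h}(g) − rh`. Here `g` is given on each ball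
`a + p^h ℤ_p` by a convergent expansion `g(x) = Σ_k ã_k(g,a) ((x−a)/p^h)^k` whose
coefficients have valuation `≥ c` and tend to `∞` uniformly; valuations are expressed
via norms (`v_p(z) ≥ t ↔ ‖z‖ ≤ p^{-t}`). -/
theorem locallyAnalytic_isCr_and_val_bound (p : ℕ) [Fact p.Prime]
    (E : Type*) [NormedField E] [Algebra ℚ_[p] E] [FiniteDimensional ℚ_[p] E]
    (hE : ∀ q : ℚ_[p], ‖algebraMap ℚ_[p] E q‖ = ‖q‖)
    (r : ℝ) (hr : 0 ≤ r) (h : ℕ) (g : ℤ_[p] → E) (A : ℤ_[p] → ℕ → E)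
    (hexp : ∀ a x : ℤ_[p], ‖x - a‖ ≤ (p : ℝ) ^ (-(h : ℤ)) →
      HasSum (fun k : ℕ =>
        A a k * (algebraMap ℚ_[p] E (((x - a : ℤ_[p]) : ℚ_[p]) / (p : ℚ_[p]) ^ h)) ^ k) (g x))
    (c : ℝ) (hc : ∀ (a : ℤ_[p]) (k : ℕ), ‖A a k‖ ≤ (p : ℝ) ^ (-c))
    (hgrow : ∀ C : ℝ, ∃ K : ℕ, ∀ (a : ℤ_[p]), ∀ k ≥ K, ‖A a k‖ ≤ (p : ℝ) ^ (-C)) :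
    ∃ D : ℕ → ℤ_[p] → E, D 0 = g ∧
      -- `g` is of class `C^r`: `C_{g,r}(h') → ∞` as `h' → ∞`
      (∀ C : ℝ, ∃ H : ℕ, ∀ h' : ℕ, H ≤ h' → ∀ x y : ℤ_[p],
          ‖y‖ ≤ (p : ℝ) ^ (-(h' : ℤ)) →
          ‖g (x + y) - ∑ j ∈ Finset.range (⌊r⌋₊ + 1),
              algebraMap ℚ_[p] E (((y : ℚ_[p]) ^ j) / (j.factorial : ℚ_[p])) * D j x‖
            ≤ (p : ℝ) ^ (-(C + r * h'))) ∧
      -- first part of `v'_{C^r}(g) ≥ c − r h`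
      (∀ j ≤ ⌊r⌋₊, ∀ x : ℤ_[p],
          ‖algebraMap ℚ_[p] E ((j.factorial : ℚ_[p])⁻¹) * D j x‖ ≤ (p : ℝ) ^ (-(c - r * h))) ∧
      -- second part of `v'_{C^r}(g) ≥ c − r h`
      (∀ x y : ℤ_[p],
          ‖g (x + y) - ∑ j ∈ Finset.range (⌊r⌋₊ + 1),
              algebraMap ℚ_[p] E (((y : ℚ_[p]) ^ j) / (j.factorial : ℚ_[p])) * D j x‖
            ≤ (p : ℝ) ^ (-(c - r * h)) * ‖y‖ ^ r) :=
  locallyAnalytic_isCr_and_val_bound_general p E hE r hr h g A hexp c hc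
end

section
/- Let C(N) = Σ_{n=1}^{N} v_p(n!) and let a_0, …, a_N ∈ E. Then for every integer h, min_{0≤j≤N}(v_p(a_j) + jh) ≥ (min_{z ∈ p^h ℤ_p} v_p(Σ_{j=0}^{N} a_j z^j / j!)) − C(N). -/
open Finset fwdDiff Function

section FwdDiffPow

variable {R : Type*} [CommRing R]

lemma fwdDiff_pow_eq (w : R) (j : ℕ) :
    fwdDiff w (fun z : R => z ^ j) =
      fun z => ∑ m ∈ range j, (j.choose m : R) * w ^ (j - m) * z ^ m := by
  funext z
  show (z + w) ^ j - z ^ j = _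
  rw [add_pow, Finset.sum_range_succ, Nat.sub_self, pow_zero, Nat.choose_self, Nat.cast_one,
    mul_one, mul_one, add_sub_cancel_right]
  exact Finset.sum_congr rfl fun m _ => by ring

lemma fwdDiff_iter_pow (w : R) : ∀ N j, j ≤ N →
    (fwdDiff w)^[N] (fun z : R => z ^ j) 0 =
      if j = N then (N.factorial : R) * w ^ N else 0 := by
  intro N
  induction N with
  | zero =>
    intro j hj
    interval_cases j
    simp
  | succ N IH =>
    intro j hj
    rw [iterate_succ_apply, fwdDiff_pow_eq]
    have h1 : (fun z : R => ∑ m ∈ range j, (j.choose m : R) * w ^ (j - m) * z ^ m)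
        = ∑ m ∈ range j, ((j.choose m : R) * w ^ (j - m)) • (fun z : R => z ^ m) := by
      funext z
      simp [Finset.sum_apply, smul_eq_mul, mul_assoc]
    rw [h1, fwdDiff_iter_finset_sum, Finset.sum_apply]
    have h2 : ∀ m ∈ range j, (fwdDiff w)^[N] (((j.choose m : R) * w ^ (j - m)) • (fun z : R => z ^ m)) 0
        = ((j.choose m : R) * w ^ (j - m)) * (fwdDiff w)^[N] (fun z : R => z ^ m) 0 := by
      intro m _
      rw [fwdDiff_iter_const_smul, Pi.smul_apply, smul_eq_mul]
    rw [Finset.sum_congr rfl h2]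
    have h3 : ∀ m ∈ range j, (j.choose m : R) * w ^ (j - m) * (fwdDiff w)^[N] (fun z : R => z ^ m) 0
        = (j.choose m : R) * w ^ (j - m) * (if m = N then (N.factorial : R) * w ^ N else 0) := by
      intro m hm
      rw [IH m (by have := Finset.mem_range.mp hm; omega)]
    rw [Finset.sum_congr rfl h3]
    rcases eq_or_lt_of_le hj with rfl | hlt
    · rw [if_pos rfl]
      rw [Finset.sum_eq_single N]
      · rw [if_pos rfl, Nat.choose_succ_self_right]
        have hh : N + 1 - N = 1 := by omega
        rw [hh, Nat.factorial_succ]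
        push_cast
        ring
      · intro m _ hne
        rw [if_neg hne, mul_zero]
      · intro hN
        exact absurd (Finset.self_mem_range_succ N) hN
    · have hjN : j ≤ N := by omega
      rw [if_neg (by omega)]
      apply Finset.sum_eq_zero
      intro m hm
      have hm' : m < j := Finset.mem_range.mp hm
      rw [if_neg (by omega), mul_zero]

end FwdDiffPow

lemma fwdDiff_iter_addMonoidHom_comp {M G G' : Type*} [AddCommMonoid M] [AddCommGroup G]
    [AddCommGroup G'] (T : G →+ G') (w : M) (f : M → G) (n : ℕ) :
    (fwdDiff w)^[n] (fun x => T (f x)) = fun x => T ((fwdDiff w)^[n] f x) := by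
  induction n generalizing f with
  | zero => rfl
  | succ n IH =>
    rw [iterate_succ_apply, iterate_succ_apply]
    have : fwdDiff w (fun x => T (f x)) = fun x => T (Δ_[w] f x) := by
      funext x
      simp [fwdDiff, map_sub]
    rw [this, IH]

lemma colmez_ultra (p : ℕ) [Fact p.Prime]
    (E : Type*) [NormedField E] [Algebra ℚ_[p] E]
    (hE : ∀ q : ℚ_[p], ‖algebraMap ℚ_[p] E q‖ = ‖q‖) : IsUltrametricDist E := by
  apply IsUltrametricDist.isUltrametricDist_of_forall_norm_natCast_le_one
  intro n
  rw [← map_natCast (algebraMap ℚ_[p] E), hE]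
  have h1 : ((n : ℤ) : ℚ_[p]) = (n : ℚ_[p]) := by push_cast; ring
  rw [← h1]
  exact Padic.norm_int_le_one _

lemma padic_norm_nat_le_one (p : ℕ) [Fact p.Prime] (n : ℕ) : ‖(n : ℚ_[p])‖ ≤ 1 := by
  have h1 : ((n : ℤ) : ℚ_[p]) = (n : ℚ_[p]) := by push_cast; ring
  rw [← h1]
  exact Padic.norm_int_le_one _

lemma colmez_top (p : ℕ) [Fact p.Prime]
    (E : Type*) [NormedField E] [Algebra ℚ_[p] E]
    (hE : ∀ q : ℚ_[p], ‖algebraMap ℚ_[p] E q‖ = ‖q‖)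
    (N : ℕ) (a : ℕ → E) (h : ℤ) (c : ℝ)
    (hc : ∀ z : ℚ_[p], ‖z‖ ≤ (p : ℝ) ^ (-h) →
      ‖∑ j ∈ Finset.range (N + 1),
          algebraMap ℚ_[p] E (z ^ j / (j.factorial : ℚ_[p])) * a j‖ ≤ (p : ℝ) ^ (-c)) :
    ‖algebraMap ℚ_[p] E (((p : ℚ_[p]) ^ h) ^ N) * a N‖ ≤ (p : ℝ) ^ (-c) := by
  haveI : IsUltrametricDist E := colmez_ultra p E hE
  set φ := algebraMap ℚ_[p] E with hφ
  set w : ℚ_[p] := (p : ℚ_[p]) ^ h with hw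
  set f : ℚ_[p] → E :=
    fun z => ∑ j ∈ Finset.range (N + 1), φ (z ^ j / (j.factorial : ℚ_[p])) * a j with hf
  have key : (fwdDiff w)^[N] f 0 = φ (w ^ N) * a N := by
    have hfeq : f = ∑ j ∈ Finset.range (N + 1),
        (fun z : ℚ_[p] => φ (z ^ j / (j.factorial : ℚ_[p])) * a j) := by
      funext z
      rw [hf, Finset.sum_apply]
    rw [hfeq, fwdDiff_iter_finset_sum, Finset.sum_apply]
    have hterm : ∀ j ∈ Finset.range (N + 1),
        (fwdDiff w)^[N] (fun z : ℚ_[p] => φ (z ^ j / (j.factorial : ℚ_[p])) * a j) 0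
          = if j = N then φ ((N.factorial : ℚ_[p]) * w ^ N / (N.factorial : ℚ_[p])) * a N
            else 0 := by
      intro j hj
      have hjN : j ≤ N := by have := Finset.mem_range.mp hj; omega
      set T : ℚ_[p] →+ E := AddMonoidHom.mk' (fun x => φ (x / (j.factorial : ℚ_[p])) * a j)
        (fun x y => by rw [add_div, map_add, add_mul]) with hT
      have h2 : (fun z : ℚ_[p] => φ (z ^ j / (j.factorial : ℚ_[p])) * a j)
          = fun z => T ((fun z : ℚ_[p] => z ^ j) z) := rfl
      rw [h2, fwdDiff_iter_addMonoidHom_comp]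
      show T ((fwdDiff w)^[N] (fun z : ℚ_[p] => z ^ j) 0) = _
      rw [fwdDiff_iter_pow w N j hjN]
      by_cases hj2 : j = N
      · subst hj2
        rw [if_pos rfl, if_pos rfl]
        rfl
      · rw [if_neg hj2, if_neg hj2, map_zero]
    rw [Finset.sum_congr rfl hterm, Finset.sum_ite_eq' (Finset.range (N + 1)) N
      (fun _ => φ ((N.factorial : ℚ_[p]) * w ^ N / (N.factorial : ℚ_[p])) * a N),
      if_pos (Finset.self_mem_range_succ N),
      mul_div_cancel_left₀ _ (by exact_mod_cast N.factorial_ne_zero : (N.factorial : ℚ_[p]) ≠ 0)]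
  have expand := fwdDiff_iter_eq_sum_shift w f N 0
  rw [key] at expand
  rw [expand]
  apply IsUltrametricDist.norm_sum_le_of_forall_le_of_nonneg
  · positivity
  · intro k _
    rw [zsmul_eq_mul, norm_mul]
    have hb1 : ‖(((-1 : ℤ) ^ (N - k) * (N.choose k : ℤ) : ℤ) : E)‖ ≤ 1 := by
      rw [← map_intCast φ, hE]
      exact Padic.norm_int_le_one _
    have hb2 : ‖f (0 + k • w)‖ ≤ (p : ℝ) ^ (-c) := by
      apply hc
      rw [zero_add, nsmul_eq_mul, norm_mul, hw, Padic.norm_p_zpow]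
      calc ‖(k : ℚ_[p])‖ * (p : ℝ) ^ (-h)
          ≤ 1 * (p : ℝ) ^ (-h) := by
            apply mul_le_mul_of_nonneg_right (padic_norm_nat_le_one p k)
            positivity
        _ = (p : ℝ) ^ (-h) := one_mul _
    calc ‖(((-1 : ℤ) ^ (N - k) * (N.choose k : ℤ) : ℤ) : E)‖ * ‖f (0 + k • w)‖
        ≤ 1 * ((p : ℝ) ^ (-c)) := by
          apply mul_le_mul hb1 hb2 (norm_nonneg _) zero_le_one
      _ = (p : ℝ) ^ (-c) := one_mul _

lemma colmez_aux (p : ℕ) [Fact p.Prime]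
    (E : Type*) [NormedField E] [Algebra ℚ_[p] E]
    (hE : ∀ q : ℚ_[p], ‖algebraMap ℚ_[p] E q‖ = ‖q‖) :
    ∀ (N : ℕ) (a : ℕ → E) (h : ℤ) (c : ℝ),
      (∀ z : ℚ_[p], ‖z‖ ≤ (p : ℝ) ^ (-h) →
        ‖∑ j ∈ Finset.range (N + 1),
            algebraMap ℚ_[p] E (z ^ j / (j.factorial : ℚ_[p])) * a j‖ ≤ (p : ℝ) ^ (-c)) →
      ∀ j ≤ N, ‖a j‖ ≤ (p : ℝ) ^
        (-(c - (∑ n ∈ Finset.Icc 1 N, (padicValNat p n.factorial : ℝ)) - (j : ℝ) * (h : ℝ))) := by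
  have hp0 : (0:ℝ) < p := by exact_mod_cast (Fact.out : p.Prime).pos
  have hp1 : (1:ℝ) < p := by exact_mod_cast (Fact.out : p.Prime).one_lt
  intro N
  induction N with
  | zero =>
    intro a h c hc j hj
    interval_cases j
    have htop := colmez_top p E hE 0 a h c hc
    rw [pow_zero, map_one, one_mul] at htop
    refine htop.trans (le_of_eq ?_)
    have h0 : (∑ n ∈ Finset.Icc 1 0, (padicValNat p n.factorial : ℝ)) = 0 := by
      rw [Finset.Icc_eq_empty (by omega), Finset.sum_empty]
    rw [h0]
    norm_num
  | succ N IH =>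
    intro a h c hc j hj
    have htop0 := colmez_top p E hE (N+1) a h c hc
    rw [norm_mul, hE] at htop0
    have hnw : ‖((p : ℚ_[p]) ^ h) ^ (N+1)‖ = (p:ℝ) ^ (-((h:ℝ) * ((N:ℝ)+1))) := by
      rw [← zpow_natCast ((p : ℚ_[p]) ^ h), ← zpow_mul, Padic.norm_p_zpow,
        ← Real.rpow_intCast]
      congr 1
      push_cast
      ring
    rw [hnw] at htop0
    have hposw : (0:ℝ) < (p:ℝ) ^ (-((h:ℝ) * ((N:ℝ)+1))) := Real.rpow_pos_of_pos hp0 _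
    have htop : ‖a (N+1)‖ ≤ (p:ℝ) ^ (-(c - ((N:ℝ)+1) * (h:ℝ))) := by
      have h2 : ‖a (N+1)‖ ≤ (p:ℝ)^(-c) / (p:ℝ)^(-((h:ℝ)*((N:ℝ)+1))) := by
        rw [le_div_iff₀ hposw, mul_comm]
        exact htop0
      rwa [← Real.rpow_sub hp0,
        show -c - -((h:ℝ)*((N:ℝ)+1)) = -(c - ((N:ℝ)+1)*(h:ℝ)) by ring] at h2
    rcases eq_or_lt_of_le hj with rfl | hlt
    · refine htop.trans (Real.rpow_le_rpow_of_exponent_le hp1.le ?_)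
      have hC : 0 ≤ ∑ n ∈ Finset.Icc 1 (N+1), (padicValNat p n.factorial : ℝ) :=
        Finset.sum_nonneg fun n _ => by positivity
      push_cast
      linarith
    · have hjN : j ≤ N := by omega
      set v : ℝ := (padicValNat p (N+1).factorial : ℝ) with hv
      have hv0 : 0 ≤ v := by positivity
      have hfact : ‖(((N+1).factorial : ℕ) : ℚ_[p])‖ = (p:ℝ) ^ (-v) := by
        rw [Padic.norm_eq_zpow_neg_valuation (by exact_mod_cast (N+1).factorial_ne_zero),
          Padic.valuation_natCast, ← Real.rpow_intCast]
        congr 1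
        rw [Int.cast_neg, Int.cast_natCast, hv]
      haveI : IsUltrametricDist E := colmez_ultra p E hE
      have hc' : ∀ z : ℚ_[p], ‖z‖ ≤ (p : ℝ) ^ (-h) →
          ‖∑ j ∈ Finset.range (N + 1),
              algebraMap ℚ_[p] E (z ^ j / (j.factorial : ℚ_[p])) * a j‖ ≤ (p:ℝ)^(-(c - v)) := by
        intro z hz
        have hsplit : ∑ j ∈ Finset.range (N + 1),
              algebraMap ℚ_[p] E (z ^ j / (j.factorial : ℚ_[p])) * a j
            = (∑ j ∈ Finset.range (N + 2),
                algebraMap ℚ_[p] E (z ^ j / (j.factorial : ℚ_[p])) * a j)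
              - algebraMap ℚ_[p] E (z ^ (N+1) / (((N+1).factorial : ℕ) : ℚ_[p])) * a (N+1) := by
          conv_rhs => rw [Finset.sum_range_succ]
          ring
        rw [hsplit, sub_eq_add_neg]
        refine le_trans (IsUltrametricDist.norm_add_le_max _ _) (max_le ?_ ?_)
        · exact (hc z hz).trans (Real.rpow_le_rpow_of_exponent_le hp1.le (by linarith))
        · rw [norm_neg, norm_mul, hE, norm_div, norm_pow, hfact]
          have hz1 : ‖z‖^(N+1) ≤ (p:ℝ)^(-(h:ℝ)*((N:ℝ)+1)) := by
            refine le_trans (pow_le_pow_left₀ (norm_nonneg z) hz _) ?_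
            rw [← Real.rpow_intCast (p:ℝ) (-h), ← Real.rpow_natCast ((p:ℝ)^(((-h : ℤ)):ℝ)) (N+1),
              ← Real.rpow_mul hp0.le]
            apply le_of_eq
            congr 1
            push_cast
            ring
          rw [Real.rpow_neg hp0.le v, div_eq_mul_inv, inv_inv]
          calc ‖z‖^(N+1) * (p:ℝ)^v * ‖a (N+1)‖
              ≤ (p:ℝ)^(-(h:ℝ)*((N:ℝ)+1)) * (p:ℝ)^v * (p:ℝ)^(-(c - ((N:ℝ)+1)*(h:ℝ))) := by
                apply mul_le_mul _ htop (norm_nonneg _) (by positivity)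
                exact mul_le_mul_of_nonneg_right hz1 (Real.rpow_nonneg hp0.le v)
            _ = (p:ℝ)^(-(c - v)) := by
                rw [← Real.rpow_add hp0, ← Real.rpow_add hp0]
                congr 1
                ring
      have hres := IH a h (c - v) hc' j hjN
      refine hres.trans (le_of_eq ?_)
      congr 1
      rw [Finset.sum_Icc_succ_top (by omega : 1 ≤ N + 1)]
      ring

open Finset

/-- Colmez's sum estimate: with `C(N) = Σ_{n=1}^N v_p(n!)`, if every value of
`z ↦ Σ_{j=0}^N a_j z^j / j!` on `p^h ℤ_p` has valuation `≥ c`, then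
`v_p(a_j) + j h ≥ c − C(N)` for all `0 ≤ j ≤ N` (valuations expressed via norms). -/
theorem colmez_sum_estimate (p : ℕ) [Fact p.Prime]
    (E : Type*) [NormedField E] [Algebra ℚ_[p] E] [FiniteDimensional ℚ_[p] E]
    (hE : ∀ q : ℚ_[p], ‖algebraMap ℚ_[p] E q‖ = ‖q‖)
    (N : ℕ) (a : ℕ → E) (h : ℤ) (c : ℝ)
    (hc : ∀ z : ℚ_[p], ‖z‖ ≤ (p : ℝ) ^ (-h) →
      ‖∑ j ∈ Finset.range (N + 1),
          algebraMap ℚ_[p] E (z ^ j / (j.factorial : ℚ_[p])) * a j‖ ≤ (p : ℝ) ^ (-c)) :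
    ∀ j ≤ N, ‖a j‖ ≤ (p : ℝ) ^
      (-(c - (∑ n ∈ Finset.Icc 1 N, (padicValNat p n.factorial : ℝ)) - (j : ℝ) * (h : ℝ))) :=
  colmez_aux p E hE N a h c hc
end

section
/- Let r/2 < n ≤ r ≤ p − 1 be integers with p prime. Then there exist λ_0, …, λ_n, λ_p ∈ ℤ_p, not all zero, with λ_p = −1, satisfying Σ_{i ∈ I} λ_i i^j = 0 for all 0 ≤ j ≤ n where I = {0,1,…,n,p}; moreover these satisfy λ_0 ≡ 1 mod p, and λ_i ≡ 0 mod p for 1 ≤ i ≤ n. -/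
open Finset Polynomial

private lemma prod_sub_one_norm_lt {p : ℕ} [Fact p.Prime] (t : Finset ℕ) (f : ℕ → ℚ_[p])
    (h : ∀ k ∈ t, ‖f k - 1‖ < 1) : ‖(∏ k ∈ t, f k) - 1‖ < 1 := by
  induction t using Finset.induction_on with
  | empty => simp
  | @insert a t ha ih =>
    rw [Finset.prod_insert ha]
    have h1 : ‖f a - 1‖ < 1 := h a (Finset.mem_insert_self _ _)
    have h2 : ‖(∏ k ∈ t, f k) - 1‖ < 1 := ih fun k hk => h k (Finset.mem_insert_of_mem hk)
    have hfa : ‖f a‖ ≤ 1 := by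
      calc ‖f a‖ = ‖(f a - 1) + 1‖ := by ring_nf
        _ ≤ max ‖f a - 1‖ ‖(1 : ℚ_[p])‖ := Padic.nonarchimedean _ _
        _ ≤ 1 := max_le h1.le (by simp)
    have key : f a * (∏ k ∈ t, f k) - 1 = f a * ((∏ k ∈ t, f k) - 1) + (f a - 1) := by ring
    rw [key]
    refine lt_of_le_of_lt (Padic.nonarchimedean _ _) (max_lt ?_ h1)
    calc ‖f a * ((∏ k ∈ t, f k) - 1)‖ = ‖f a‖ * ‖(∏ k ∈ t, f k) - 1‖ := norm_mul _ _
      _ < 1 := mul_lt_one_of_nonneg_of_lt_one_right hfa (norm_nonneg _) h2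

/-- For `r/2 < n ≤ r ≤ p − 1` there exist `λ_i ∈ ℤ_p` for `i ∈ I = {0,…,n,p}`, not all
zero, with `λ_p = −1`, such that `Σ_{i ∈ I} λ_i i^j = 0` for all `0 ≤ j ≤ n`; moreover
`λ_0 ≡ 1 mod p` and `λ_i ≡ 0 mod p` for `1 ≤ i ≤ n`. -/
theorem exists_vandermonde_coeffs (p : ℕ) [Fact p.Prime] (r n : ℕ)
    (h1 : r < 2 * n) (h2 : n ≤ r) (h3 : r ≤ p - 1) :
    ∃ l : ℕ → ℤ_[p],
      l p = -1 ∧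
      (¬ ∀ i ∈ insert p (Finset.range (n + 1)), l i = 0) ∧
      (∀ j ≤ n, ∑ i ∈ insert p (Finset.range (n + 1)), l i * (i : ℤ_[p]) ^ j = 0) ∧
      (p : ℤ_[p]) ∣ (l 0 - 1) ∧
      (∀ i, 1 ≤ i → i ≤ n → (p : ℤ_[p]) ∣ l i) := by
  have hp := Fact.out (p := p.Prime)
  have hp2 : 2 ≤ p := hp.two_le
  have hnp : n + 1 ≤ p := by omega
  set s : Finset ℕ := Finset.range (n + 1) with hs
  set v : ℕ → ℚ_[p] := fun i => (i : ℚ_[p]) with hv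
  have hvs : Set.InjOn v s := fun a _ b _ h => Nat.cast_injective h
  set B : ℕ → ℚ_[p] := fun i => (Lagrange.basis s v i).eval (p : ℚ_[p]) with hB
  have hBprod : ∀ i, B i =
      ∏ k ∈ s.erase i, ((i : ℚ_[p]) - k)⁻¹ * ((p : ℚ_[p]) - k) := by
    intro i
    simp [hB, Lagrange.basis, Lagrange.basisDivisor, eval_prod, hv]
  -- norm facts
  have hle : ∀ a b : ℕ, ‖(a : ℚ_[p]) - b‖ ≤ 1 := by
    intro a b
    have := Padic.norm_int_le_one (p := p) ((a : ℤ) - b)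
    push_cast at this
    exact this
  have hone : ∀ a b : ℕ, a ≤ n → b ≤ n → a ≠ b → ‖(a : ℚ_[p]) - b‖ = 1 := by
    intro a b ha hb hab
    have hnd : ¬ ((p : ℤ) ∣ (a : ℤ) - b) := by
      intro hdvd
      have h1 : p ∣ ((a : ℤ) - b).natAbs := by
        simpa using Int.natAbs_dvd_natAbs.mpr hdvd
      have h2 : ((a : ℤ) - b).natAbs ≤ n := by omega
      have h3 : ((a : ℤ) - b).natAbs ≠ 0 := by omega
      have := Nat.le_of_dvd (Nat.pos_of_ne_zero h3) h1
      omega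
    have hnl : ¬ ‖(((a : ℤ) - b : ℤ) : ℚ_[p])‖ < 1 := by
      rw [Padic.norm_intCast_lt_one_iff]
      exact_mod_cast hnd
    push_cast at hnl
    exact le_antisymm (hle a b) (not_lt.mp hnl)
  have hfacle : ∀ i k : ℕ, i ≤ n → k ≤ n → k ≠ i →
      ‖((i : ℚ_[p]) - k)⁻¹ * ((p : ℚ_[p]) - k)‖ ≤ 1 := by
    intro i k hi hk hki
    rw [norm_mul, norm_inv, hone i k hi hk (Ne.symm hki), inv_one, one_mul]
    exact hle p k
  have hBmem : ∀ i, i ≤ n → ‖B i‖ ≤ 1 := by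
    intro i hi
    rw [hBprod, norm_prod]
    refine Finset.prod_le_one (fun k _ => norm_nonneg _) ?_
    intro k hk
    rw [Finset.mem_erase, hs, Finset.mem_range] at hk
    exact hfacle i k hi (by omega) hk.1
  have hmem' : ∀ i, ‖(if i < n + 1 then B i else -1 : ℚ_[p])‖ ≤ 1 := by
    intro i
    split
    · exact hBmem i (by omega)
    · simp
  set L : ℕ → ℤ_[p] := fun i => ⟨if i < n + 1 then B i else -1, hmem' i⟩ with hL
  have hcoeL : ∀ i, ((L i : ℤ_[p]) : ℚ_[p]) = if i < n + 1 then B i else -1 := fun i => rfl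
  have key : ∀ j ≤ n, ∑ i ∈ s, B i * (i : ℚ_[p]) ^ j = (p : ℚ_[p]) ^ j := by
    intro j hj
    have hdeg : ((X : ℚ_[p][X]) ^ j).degree < #s := by
      rw [degree_X_pow, hs, Finset.card_range]
      exact_mod_cast Nat.lt_succ_of_le hj
    have hinterp := Lagrange.eq_interpolate hvs hdeg
    have := congrArg (eval ((p : ℕ) : ℚ_[p])) hinterp
    rw [Lagrange.interpolate_apply] at this
    simp only [eval_pow, eval_X, eval_finset_sum, eval_mul, eval_C] at this
    rw [this]
    refine Finset.sum_congr rfl fun i _ => ?_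
    simp [hv, hB, mul_comm]
  refine ⟨L, ?_, ?_, ?_, ?_, ?_⟩
  · apply Subtype.coe_injective
    show ((L p : ℤ_[p]) : ℚ_[p]) = ((-1 : ℤ_[p]) : ℚ_[p])
    rw [hcoeL, if_neg (show ¬ p < n + 1 by omega)]
    simp
  · intro hall
    have h := congrArg Subtype.val (hall p (Finset.mem_insert_self _ _))
    rw [hcoeL, if_neg (show ¬ p < n + 1 by omega)] at h
    have h2 : (-1 : ℚ_[p]) = 0 := h
    norm_num at h2
  · intro j hj
    have hps : p ∉ s := by rw [hs, Finset.mem_range]; omega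
    apply Subtype.coe_injective
    show (PadicInt.Coe.ringHom (p := p)) (∑ i ∈ insert p s, L i * (i : ℤ_[p]) ^ j)
        = (PadicInt.Coe.ringHom (p := p)) 0
    rw [map_sum, map_zero, Finset.sum_insert hps]
    simp only [map_mul, map_pow, map_natCast]
    have hLp : (PadicInt.Coe.ringHom (p := p)) (L p) = -1 := by
      show ((L p : ℤ_[p]) : ℚ_[p]) = -1
      rw [hcoeL, if_neg (show ¬ p < n + 1 by omega)]
    rw [hLp]
    have hrest : ∑ i ∈ s, (PadicInt.Coe.ringHom (p := p)) (L i) * (i : ℚ_[p]) ^ j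
        = (p : ℚ_[p]) ^ j := by
      rw [← key j hj]
      refine Finset.sum_congr rfl fun i hi => ?_
      rw [hs, Finset.mem_range] at hi
      show ((L i : ℤ_[p]) : ℚ_[p]) * _ = _
      rw [hcoeL, if_pos hi]
    rw [hrest]
    ring
  · -- l 0 ≡ 1
    rw [← PadicInt.norm_lt_one_iff_dvd, PadicInt.norm_def, PadicInt.coe_sub, PadicInt.coe_one,
      hcoeL, if_pos (show 0 < n + 1 by omega), hBprod]
    refine prod_sub_one_norm_lt _ _ ?_
    intro k hk
    rw [Finset.mem_erase, hs, Finset.mem_range] at hk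
    have hk0 : (0 : ℚ_[p]) - k ≠ 0 := by
      intro h
      have h1 := hone 0 k (by omega) (by omega) (Ne.symm hk.1)
      rw [show ((0:ℕ) : ℚ_[p]) = (0 : ℚ_[p]) by norm_num, h, norm_zero] at h1
      norm_num at h1
    have heq : ((0 : ℚ_[p]) - k)⁻¹ * ((p : ℚ_[p]) - k) - 1
        = ((0 : ℚ_[p]) - k)⁻¹ * p := by
      rw [show (1:ℚ_[p]) = ((0 : ℚ_[p]) - k)⁻¹ * ((0 : ℚ_[p]) - k) from (inv_mul_cancel₀ hk0).symm]
      ring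
    rw [show ((0:ℕ) : ℚ_[p]) = (0 : ℚ_[p]) by norm_num, heq, norm_mul, norm_inv]
    have h01 : ‖(0 : ℚ_[p]) - (k : ℚ_[p])‖ = 1 := by
      have := hone 0 k (by omega) (by omega) (Ne.symm hk.1)
      rwa [show ((0:ℕ) : ℚ_[p]) = (0 : ℚ_[p]) by norm_num] at this
    rw [h01, inv_one, one_mul, Padic.norm_p]
    rw [inv_lt_one_iff₀]
    right
    exact_mod_cast hp2.trans_lt' one_lt_two
  · -- l i ≡ 0 for 1 ≤ i ≤ n
    intro i hi1 hin
    rw [← PadicInt.norm_lt_one_iff_dvd, PadicInt.norm_def, hcoeL,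
      if_pos (show i < n + 1 by omega)]
    have h0 : (0 : ℕ) ∈ s.erase i := by
      rw [Finset.mem_erase, hs, Finset.mem_range]; omega
    rw [hBprod, ← Finset.mul_prod_erase _ _ h0]
    rw [norm_mul]
    have hf0 : ‖((i : ℚ_[p]) - ((0:ℕ) : ℚ_[p]))⁻¹ * ((p : ℚ_[p]) - ((0:ℕ) : ℚ_[p]))‖
        = (p : ℝ)⁻¹ := by
      rw [norm_mul, norm_inv, hone i 0 hin (by omega) (by omega), inv_one, one_mul]
      simp [Padic.norm_p]
    rw [hf0]
    have hrest : ‖∏ k ∈ (s.erase i).erase 0, ((i : ℚ_[p]) - k)⁻¹ * ((p : ℚ_[p]) - k)‖ ≤ 1 := by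
      rw [norm_prod]
      refine Finset.prod_le_one (fun k _ => norm_nonneg _) ?_
      intro k hk
      rw [Finset.mem_erase, Finset.mem_erase, hs, Finset.mem_range] at hk
      exact hfacle i k hin (by omega) hk.2.1
    calc (p : ℝ)⁻¹ * ‖∏ k ∈ (s.erase i).erase 0, ((i : ℚ_[p]) - k)⁻¹ * ((p : ℚ_[p]) - k)‖
        ≤ (p : ℝ)⁻¹ * 1 := mul_le_mul_of_nonneg_left hrest (by positivity)
      _ < 1 := by
          rw [mul_one, inv_lt_one_iff₀]
          right
          exact_mod_cast hp2.trans_lt' one_lt_two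
end
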